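/- arXiv:1702.08241 — 4 statements merged into one kernel-verified Lean document; each statement's English description precedes it below -/
import Mathlib

section
/- Let H, M be Hilbert spaces, A a bounded coercive symmetric bilinear form on H, b a bounded bilinear form on H×M satisfying the inf-sup condition sup_{w∈H, w≠0} |b(w,p)|/‖w‖_H ≥ β‖p‖_M for all p ∈ M with β > 0. Then for every bounded linear functional f on H there exists a unique pair (u,σ) ∈ H×M with A(u,v) + b(v,σ) = f(v) for all v ∈ H and b(u,p) = 0 for all p ∈ M. -/
/-!
On the kernel `Z = {v | b v = 0}` the form `A` is still coercive, so Lax–Milgram gives `u ∈ Z`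
with `A u = f` on `Z`. The inf-sup condition says that `p ↦ b(·, p)`, read through the Riesz
isomorphism as a map `M → H`, is bounded below; its range is therefore closed and equals `Zᗮ`,
which contains the representative of `f - A u`. This yields `σ`. For uniqueness, testing the
homogeneous problem with `v = u` gives `A u u = 0`, hence `u = 0`, and then `b(·, σ) = 0` forces
`σ = 0` by the inf-sup condition.
-/

open InnerProductSpace RealInnerProductSpace

namespace IsCoercive

variable {V : Type*}

theorem bilinearComp_subtypeL [SeminormedAddCommGroup V] [NormedSpace ℝ V]
    {B : V →L[ℝ] V →L[ℝ] ℝ} (hB : IsCoercive B) (K : Submodule ℝ V) :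
    IsCoercive (B.bilinearComp K.subtypeL K.subtypeL) := by
  obtain ⟨C, hC, hBC⟩ := hB
  exact ⟨C, hC, fun u => hBC u⟩

theorem exists_apply_eq [NormedAddCommGroup V] [InnerProductSpace ℝ V] [CompleteSpace V]
    {B : V →L[ℝ] V →L[ℝ] ℝ} (hB : IsCoercive B) (f : V →L[ℝ] ℝ) : ∃ u, B u = f := by
  refine ⟨hB.continuousLinearEquivOfBilin.symm ((toDual ℝ V).symm f),
    ContinuousLinearMap.ext fun w => ?_⟩
  rw [← hB.continuousLinearEquivOfBilin_apply, ContinuousLinearEquiv.apply_symm_apply,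
    toDual_symm_apply]

theorem eq_zero_of_apply_self_eq_zero [NormedAddCommGroup V] [NormedSpace ℝ V]
    {B : V →L[ℝ] V →L[ℝ] ℝ} (hB : IsCoercive B) {u : V} (hu : B u u = 0) : u = 0 := by
  obtain ⟨C, hC, hBC⟩ := hB
  rw [← norm_le_zero_iff]
  by_contra! hu_pos
  linarith [hBC u, mul_pos (mul_pos hC hu_pos) hu_pos]

end IsCoercive

theorem ContinuousLinearMap.iSup_abs_div_norm_le_opNorm {E : Type*} [SeminormedAddCommGroup E]
    [NormedSpace ℝ E] (φ : E →L[ℝ] ℝ) : ⨆ w : {w : E // w ≠ 0}, |φ w.1| / ‖w.1‖ ≤ ‖φ‖ :=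
  Real.iSup_le (fun w => div_le_of_le_mul₀ (norm_nonneg _) (norm_nonneg _) (φ.le_opNorm w.1))
    (norm_nonneg _)

section SaddlePoint

variable {H M : Type*} [NormedAddCommGroup H] [InnerProductSpace ℝ H]
  [NormedAddCommGroup M] [InnerProductSpace ℝ M]
  {A : H →L[ℝ] H →L[ℝ] ℝ} {b : H →L[ℝ] M →L[ℝ] ℝ} {β : ℝ}

theorem exists_flip_eq_of_bound_below [CompleteSpace H] [CompleteSpace M] (hβ : 0 < β)
    (hb : ∀ p, β * ‖p‖ ≤ ‖b.flip p‖) (g : H →L[ℝ] ℝ) (hg : ∀ v ∈ b.ker, g v = 0) :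
    ∃ σ, b.flip σ = g := by
  set B : M →L[ℝ] H :=
    (toDual ℝ H).symm.toContinuousLinearEquiv.toContinuousLinearMap.comp b.flip
  have inner_B : ∀ p v, ⟪B p, v⟫ = b v p := fun p v => by simp [B]
  have hB : AntilipschitzWith (Real.toNNReal β⁻¹) B := B.antilipschitz_of_bound fun p => by
    rw [Real.coe_toNNReal _ (inv_nonneg.2 hβ.le), ← div_eq_inv_mul, le_div_iff₀' hβ]
    simpa [B] using hb p
  have := hB.completeSpace_range_clm
  have hg_mem : (toDual ℝ H).symm g ∈ B.rangeᗮᗮ := by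
    rw [Submodule.mem_orthogonal]
    intro w hw
    have hbw : w ∈ b.ker := ContinuousLinearMap.ext fun p => by
      show b w p = 0
      rw [← inner_B, real_inner_comm]
      exact (Submodule.mem_orthogonal' _ _).1 hw (B p) ⟨p, rfl⟩
    rw [real_inner_comm, toDual_symm_apply, hg w hbw]
  rw [Submodule.orthogonal_orthogonal] at hg_mem
  obtain ⟨σ, hσ⟩ := hg_mem
  rw [ContinuousLinearMap.coe_coe] at hσ
  exact ⟨σ, ContinuousLinearMap.ext fun v => by
    rw [ContinuousLinearMap.flip_apply, ← inner_B, hσ, toDual_symm_apply]⟩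

theorem saddle_point_eq_zero (hA : IsCoercive A) (hβ : 0 < β)
    (hb : ∀ p, β * ‖p‖ ≤ ‖b.flip p‖) {u : H} {σ : M}
    (h₁ : ∀ v, A u v + b v σ = 0) (h₂ : ∀ p, b u p = 0) : u = 0 ∧ σ = 0 := by
  have hu : u = 0 := hA.eq_zero_of_apply_self_eq_zero (by linarith [h₁ u, h₂ σ])
  have hσ : b.flip σ = 0 := ContinuousLinearMap.ext fun v => by simpa [hu] using h₁ v
  refine ⟨hu, norm_le_zero_iff.1 (nonpos_of_mul_nonpos_right ?_ hβ)⟩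
  simpa [hσ] using hb σ

theorem existsUnique_saddle_point [CompleteSpace H] [CompleteSpace M] (hA : IsCoercive A)
    (hβ : 0 < β) (hb : ∀ p, β * ‖p‖ ≤ ‖b.flip p‖) (f : H →L[ℝ] ℝ) :
    ∃! uσ : H × M, (∀ v, A uσ.1 v + b v uσ.2 = f v) ∧ ∀ p, b uσ.1 p = 0 := by
  obtain ⟨⟨u, hu_mem⟩, hu⟩ :=
    (hA.bilinearComp_subtypeL b.ker).exists_apply_eq (f ∘L b.ker.subtypeL)
  have hu_ker : ∀ p, b u p = 0 := fun p => congr($hu_mem p)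
  have hu_eq : ∀ z ∈ b.ker, A u z = f z := fun z hz => congr($hu ⟨z, hz⟩)
  obtain ⟨σ, hσ⟩ := exists_flip_eq_of_bound_below hβ hb (f - A u) fun z hz => by
    rw [sub_apply, hu_eq z hz, sub_self]
  have hσ_eq : ∀ v, b v σ = f v - A u v := fun v => congr($hσ v)
  refine ⟨(u, σ), ⟨fun v => by linarith [hσ_eq v], hu_ker⟩, ?_⟩
  rintro ⟨u', σ'⟩ ⟨h₁, h₂⟩
  obtain ⟨hu', hσ'⟩ := saddle_point_eq_zero hA hβ hb (u := u' - u) (σ := σ' - σ)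
    (fun v => by simp only [map_sub, sub_apply]; linarith [h₁ v, hσ_eq v])
    (fun p => by simp only [map_sub, sub_apply, h₂ p, hu_ker, sub_self])
  exact Prod.ext (sub_eq_zero.1 hu') (sub_eq_zero.1 hσ')

end SaddlePoint

theorem saddle_point_existence_uniqueness_general
    {H M : Type*} [NormedAddCommGroup H] [InnerProductSpace ℝ H] [CompleteSpace H]
    [NormedAddCommGroup M] [InnerProductSpace ℝ M] [CompleteSpace M]
    (A : H →ₗ[ℝ] H →ₗ[ℝ] ℝ) (b : H →ₗ[ℝ] M →ₗ[ℝ] ℝ)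
    (CA : ℝ) (hA_bdd : ∀ u v, |A u v| ≤ CA * ‖u‖ * ‖v‖)
    (α : ℝ) (hα : 0 < α) (hA_coer : ∀ v, α * ‖v‖ ^ 2 ≤ A v v)
    (Cb : ℝ) (hb_bdd : ∀ w p, |b w p| ≤ Cb * ‖w‖ * ‖p‖)
    (β : ℝ) (hβ : 0 < β)
    (hinfsup : ∀ p : M, β * ‖p‖ ≤ ⨆ w : {w : H // w ≠ 0}, |b w.1 p| / ‖w.1‖)
    (f : H →L[ℝ] ℝ) :
    ∃! uσ : H × M,
      (∀ v : H, A uσ.1 v + b v uσ.2 = f v) ∧ (∀ p : M, b uσ.1 p = 0) := by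
  let A' := A.mkContinuous₂ CA fun u v => by simpa only [Real.norm_eq_abs] using hA_bdd u v
  let b' := b.mkContinuous₂ Cb fun w p => by simpa only [Real.norm_eq_abs] using hb_bdd w p
  have hA' : IsCoercive A' := ⟨α, hα, fun v => by rw [mul_assoc, ← sq]; exact hA_coer v⟩
  have hb' : ∀ p, β * ‖p‖ ≤ ‖b'.flip p‖ := fun p =>
    (hinfsup p).trans (b'.flip p).iSup_abs_div_norm_le_opNorm
  exact existsUnique_saddle_point hA' hβ hb' f

/-- Existence and uniqueness for the saddle-point (mixed) problem: with `A` bounded,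
symmetric, coercive on `H`, `b` bounded bilinear on `H × M` satisfying the inf-sup
condition, for every bounded linear functional `f` there is a unique `(u,σ)` with
`A(u,v) + b(v,σ) = f(v)` for all `v` and `b(u,p) = 0` for all `p`. -/
theorem saddle_point_existence_uniqueness
    {H M : Type*} [NormedAddCommGroup H] [InnerProductSpace ℝ H] [CompleteSpace H]
    [NormedAddCommGroup M] [InnerProductSpace ℝ M] [CompleteSpace M]
    (A : H →ₗ[ℝ] H →ₗ[ℝ] ℝ) (b : H →ₗ[ℝ] M →ₗ[ℝ] ℝ)
    (CA : ℝ) (hA_bdd : ∀ u v, |A u v| ≤ CA * ‖u‖ * ‖v‖)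
    (hA_symm : ∀ u v, A u v = A v u)
    (α : ℝ) (hα : 0 < α) (hA_coer : ∀ v, α * ‖v‖ ^ 2 ≤ A v v)
    (Cb : ℝ) (hb_bdd : ∀ w p, |b w p| ≤ Cb * ‖w‖ * ‖p‖)
    (β : ℝ) (hβ : 0 < β)
    (hinfsup : ∀ p : M, β * ‖p‖ ≤ ⨆ w : {w : H // w ≠ 0}, |b w.1 p| / ‖w.1‖)
    (f : H →L[ℝ] ℝ) :
    ∃! uσ : H × M,
      (∀ v : H, A uσ.1 v + b v uσ.2 = f v) ∧ (∀ p : M, b uσ.1 p = 0) :=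
  saddle_point_existence_uniqueness_general A b CA hA_bdd α hα hA_coer Cb hb_bdd β hβ hinfsup f
end

section
/- Let T be a compact self-adjoint positive operator on a Hilbert space and T_h a sequence of self-adjoint operators converging to T pointwise such that the set ⋃_h (T − T_h)B (B the unit ball) is relatively compact. Then ‖T − T_h‖ → 0 in operator norm. -/
/-!
Put `S n = T - T n`: these are symmetric and tend to `0` pointwise. For `‖x n‖ ≤ 1`,
`⟪S n (x n), z⟫ = ⟪x n, S n z⟫ → 0`, so `S n (x n) → 0` weakly; as these vectors stay in a
compact set, where the weak and norm topologies agree, `S n (x n) → 0` in norm. Choosing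
`x n` with `‖S n‖ ≤ 2 ‖S n (x n)‖` gives `‖S n‖ → 0`.
-/

open Filter Topology Metric

section Normed

variable {𝕜 E F ι : Type*} {l : Filter ι} [DenselyNormedField 𝕜] [NormedAddCommGroup E]
  [SeminormedAddCommGroup F] [NormedSpace 𝕜 E] [NormedSpace 𝕜 F]

theorem ContinuousLinearMap.exists_opNorm_le_two_mul_norm_apply (S : E →L[𝕜] F) :
    ∃ x : E, ‖x‖ ≤ 1 ∧ ‖S‖ ≤ 2 * ‖S x‖ := by
  rcases (norm_nonneg S).eq_or_lt with hS | hS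
  · exact ⟨0, by simp, by simp [← hS]⟩
  · obtain ⟨x, hx, hSx⟩ := S.exists_lt_apply_of_lt_opNorm (half_lt_self hS)
    exact ⟨x, hx.le, by linarith⟩

theorem tendsto_opNorm_zero_of_forall_tendsto_apply {S : ι → E →L[𝕜] F}
    (h : ∀ x : ι → E, (∀ i, ‖x i‖ ≤ 1) → Tendsto (fun i => S i (x i)) l (𝓝 0)) :
    Tendsto (fun i => ‖S i‖) l (𝓝 0) := by
  choose x hx hSx using fun i => (S i).exists_opNorm_le_two_mul_norm_apply
  have h2 : Tendsto (fun i => 2 * ‖S i (x i)‖) l (𝓝 0) := by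
    simpa using (h x hx).norm.const_mul 2
  exact squeeze_zero (fun i => norm_nonneg _) hSx h2

end Normed

section InnerProduct

variable {𝕜 E ι : Type*} {l : Filter ι} [RCLike 𝕜] [NormedAddCommGroup E]
  [InnerProductSpace 𝕜 E]

theorem IsCompact.tendsto_of_tendsto_inner {K : Set E} (hK : IsCompact K) {y : ι → E} {a : E}
    (hyK : ∀ᶠ i in l, y i ∈ K)
    (hy : ∀ z, Tendsto (fun i => inner 𝕜 (y i) z) l (𝓝 (inner 𝕜 a z))) :
    Tendsto y l (𝓝 a) := by
  refine hK.tendsto_nhds_of_unique_mapClusterPt hyK fun b _ hb => ext_inner_right 𝕜 fun z => ?_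
  have hbz : MapClusterPt (inner 𝕜 b z) l (fun i => inner 𝕜 (y i) z) :=
    hb.tendsto_comp ((continuous_id.inner continuous_const).tendsto b)
  exact eq_of_nhds_neBot (ClusterPt.mono hbz (hy z))

theorem LinearMap.IsSymmetric.tendsto_inner_apply_zero {S : ι → E →L[𝕜] E}
    (hS : ∀ i, (S i : E →ₗ[𝕜] E).IsSymmetric) (hS0 : ∀ z, Tendsto (fun i => S i z) l (𝓝 0))
    {x : ι → E} {C : ℝ} (hx : ∀ i, ‖x i‖ ≤ C) (z : E) :
    Tendsto (fun i => inner 𝕜 (S i (x i)) z) l (𝓝 0) := by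
  have hC : Tendsto (fun i => C * ‖S i z‖) l (𝓝 0) := by
    simpa using (hS0 z).norm.const_mul C
  refine squeeze_zero_norm (fun i => ?_) hC
  calc ‖inner 𝕜 (S i (x i)) z‖ = ‖inner 𝕜 (x i) (S i z)‖ := congrArg norm (hS i (x i) z)
    _ ≤ ‖x i‖ * ‖S i z‖ := norm_inner_le_norm _ _
    _ ≤ C * ‖S i z‖ := by gcongr; exact hx i

theorem tendsto_opNorm_zero_of_isSymmetric_of_isCompact {S : ι → E →L[𝕜] E}
    (hS : ∀ i, (S i : E →ₗ[𝕜] E).IsSymmetric) (hS0 : ∀ z, Tendsto (fun i => S i z) l (𝓝 0))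
    {K : Set E} (hK : IsCompact K) (hSK : ∀ i, S i '' closedBall 0 1 ⊆ K) :
    Tendsto (fun i => ‖S i‖) l (𝓝 0) := by
  refine tendsto_opNorm_zero_of_forall_tendsto_apply fun x hx => ?_
  have hxK : ∀ i, S i (x i) ∈ K := fun i =>
    hSK i ⟨x i, mem_closedBall_zero_iff.2 (hx i), rfl⟩
  refine hK.tendsto_of_tendsto_inner (𝕜 := 𝕜) (Eventually.of_forall hxK) fun z => ?_
  simpa using LinearMap.IsSymmetric.tendsto_inner_apply_zero hS hS0 hx z

end InnerProduct

theorem collectively_compact_norm_convergence_general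
    {H : Type*} [NormedAddCommGroup H] [InnerProductSpace ℝ H]
    (T : H →L[ℝ] H) (Th : ℕ → H →L[ℝ] H)
    (hT_sa : ∀ x y : H, (inner ℝ (T x) y : ℝ) = inner ℝ x (T y))
    (hTh_sa : ∀ n, ∀ x y : H, (inner ℝ (Th n x) y : ℝ) = inner ℝ x (Th n y))
    (h_ptwise : ∀ f : H, Tendsto (fun n => Th n f) atTop (nhds (T f)))
    (h_collcomp : IsCompact (closure
      (⋃ n : ℕ, (fun x => T x - Th n x) '' Metric.closedBall (0:H) 1))) :
    Tendsto (fun n => ‖T - Th n‖) atTop (nhds 0) := by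
  have hS : ∀ n, ((T - Th n : H →L[ℝ] H) : H →ₗ[ℝ] H).IsSymmetric := fun n =>
    LinearMap.IsSymmetric.sub (T := (T : H →ₗ[ℝ] H)) hT_sa (hTh_sa n)
  have hS0 : ∀ f, Tendsto (fun n => (T - Th n) f) atTop (𝓝 0) := fun f => by
    simpa using (h_ptwise f).const_sub (T f)
  exact tendsto_opNorm_zero_of_isSymmetric_of_isCompact hS hS0 h_collcomp fun n =>
    (Set.subset_iUnion (fun n => (fun x => T x - Th n x) '' closedBall (0 : H) 1) n).trans
      subset_closure

/-- If `T` is a compact self-adjoint positive operator, `T_n` are self-adjoint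
operators converging pointwise to `T`, and the collective image
`⋃ n, (T − T_n)(B)` of the unit ball is relatively compact, then `‖T − T_n‖ → 0`. -/
theorem collectively_compact_norm_convergence
    {H : Type*} [NormedAddCommGroup H] [InnerProductSpace ℝ H] [CompleteSpace H]
    (T : H →L[ℝ] H) (Th : ℕ → H →L[ℝ] H)
    (hT_sa : ∀ x y : H, (inner ℝ (T x) y : ℝ) = inner ℝ x (T y))
    (hT_pos : ∀ x : H, (0:ℝ) ≤ inner ℝ (T x) x)
    (hT_compact : IsCompactOperator T)
    (hTh_sa : ∀ n, ∀ x y : H, (inner ℝ (Th n x) y : ℝ) = inner ℝ x (Th n y))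
    (h_ptwise : ∀ f : H, Tendsto (fun n => Th n f) atTop (nhds (T f)))
    (h_collcomp : IsCompact (closure
      (⋃ n : ℕ, (fun x => T x - Th n x) '' Metric.closedBall (0:H) 1))) :
    Tendsto (fun n => ‖T - Th n‖) atTop (nhds 0) :=
  collectively_compact_norm_convergence_general T Th hT_sa hTh_sa h_ptwise h_collcomp
end

section
/- Let T be a self-adjoint operator on a Hilbert space with simple eigenvalue ν of unit eigenvector u, and let ρ = dist(ν, σ(T)\{ν}) > 0. If ν₀ is not an eigenvalue of T, |ν₀ − ν| ≤ ρ/4, and u₀ is a unit vector with ‖u₀ − u‖ ≤ 1/2, then the solution uˢ of (ν₀ − T)uˢ = u₀, normalized to u' = uˢ/‖uˢ‖, satisfies dist(u', span{u}) ≤ (4/ρ)|ν₀ − ν| ‖u₀ − proj_{span u} u₀‖. -/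
/-!
By the spectral theorem for compact self-adjoint operators the eigenspaces of `T` span a dense
subspace, and on an eigenvector of eigenvalue `μ ≠ ν` the operator `T - ν` multiplies norms by
`|μ - ν| ≥ ρ`. Pythagoras across the eigenspaces then gives `ρ ‖v‖ ≤ ‖(T - ν) v‖` for every
`v ⊥ u`, hence `(3ρ/4) ‖v‖ ≤ ‖(ν₀ - T) v‖`. Applied to the component `v = uˢ - ⟪u, uˢ⟫ u`,
which solves `(ν₀ - T) v = u₀ - ⟪u, u₀⟫ u`, this bounds the distance of `uˢ` to `span {u}`, while
`⟪u, uˢ⟫ = ⟪u, u₀⟫ / (ν₀ - ν)` with `⟪u, u₀⟫ ≥ 1/2` makes `‖uˢ‖ ≥ 1 / (2 |ν₀ - ν|)`.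
-/

open Module End Metric

section

variable {E : Type*} [NormedAddCommGroup E] [InnerProductSpace ℝ E]

theorem LinearMap.IsSymmetric.mul_infDist_eigenspace_le_of_mem_iSup {T : E →ₗ[ℝ] E}
    (hT : T.IsSymmetric) {ν ρ : ℝ} (hρ : 0 ≤ ρ)
    (hgap : ∀ μ, HasEigenvalue T μ → μ ≠ ν → ρ ≤ |μ - ν|) {v : E}
    (hv : v ∈ ⨆ μ, eigenspace T μ) :
    ρ * infDist v (eigenspace T ν) ≤ ‖T v - ν • v‖ := by
  classical
  obtain ⟨s, hs⟩ := Submodule.mem_iSup_iff_exists_finset.mp hv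
  have hs' : v ∈ ⨆ μ ∈ insert ν s, eigenspace T μ :=
    (biSup_mono fun _ => Finset.mem_insert_of_mem : (⨆ μ ∈ s, eigenspace T μ) ≤ _) hs
  obtain ⟨l, rfl⟩ := (Submodule.mem_iSup_finset_iff_exists_sum _ _).mp hs'
  set t := insert ν s
  have hO := hT.orthogonalFamily_eigenspaces
  set w := ∑ μ ∈ t.erase ν, (l μ : E)
  have hdist : infDist (∑ μ ∈ t, (l μ : E)) (eigenspace T ν) ≤ ‖w‖ := by
    rw [← Finset.add_sum_erase t _ (Finset.mem_insert_self ν s)]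
    simpa [dist_eq_norm] using infDist_le_dist_of_mem (x := (l ν : E) + w) (l ν).2
  have happly : T (∑ μ ∈ t, (l μ : E)) - ν • ∑ μ ∈ t, (l μ : E)
      = ∑ μ ∈ t, (eigenspace T μ).subtypeₗᵢ ((μ - ν) • l μ) := by
    simp [Finset.smul_sum, ← Finset.sum_sub_distrib, sub_smul, mem_eigenspace_iff.mp (l _).2]
  have hterm : ∀ μ ∈ t.erase ν, ρ ^ 2 * ‖(l μ : E)‖ ^ 2 ≤ ‖(μ - ν) • (l μ : E)‖ ^ 2 := by
    intro μ hμ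
    rcases eq_or_ne (l μ : E) 0 with h0 | h0
    · simp [h0]
    have := hgap μ (hasEigenvalue_of_hasEigenvector ⟨(l μ).2, h0⟩) (Finset.ne_of_mem_erase hμ)
    rw [norm_smul, mul_pow, Real.norm_eq_abs]
    gcongr
  have hsq : (ρ * ‖w‖) ^ 2 ≤ ‖T (∑ μ ∈ t, (l μ : E)) - ν • ∑ μ ∈ t, (l μ : E)‖ ^ 2 := by
    calc (ρ * ‖w‖) ^ 2 = ∑ μ ∈ t.erase ν, ρ ^ 2 * ‖(l μ : E)‖ ^ 2 := by
          rw [mul_pow, ← Finset.mul_sum]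
          congr 1
          simpa using hO.norm_sum l (t.erase ν)
      _ ≤ ∑ μ ∈ t.erase ν, ‖(μ - ν) • (l μ : E)‖ ^ 2 := Finset.sum_le_sum hterm
      _ ≤ ∑ μ ∈ t, ‖(μ - ν) • (l μ : E)‖ ^ 2 :=
          Finset.sum_le_sum_of_subset_of_nonneg (Finset.erase_subset _ _)
            fun _ _ _ => by positivity
      _ = _ := by rw [happly, hO.norm_sum]; rfl
  exact (mul_le_mul_of_nonneg_left hdist hρ).trans
    ((sq_le_sq₀ (by positivity) (norm_nonneg _)).mp hsq)

theorem Submodule.norm_le_infDist_of_mem_orthogonal {K : Submodule ℝ E} {v : E} (hv : v ∈ Kᗮ) :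
    ‖v‖ ≤ infDist v K := by
  refine (le_infDist ⟨0, K.zero_mem⟩).mpr fun k hk => ?_
  rw [dist_eq_norm, ← sq_le_sq₀ (norm_nonneg _) (norm_nonneg _), norm_sub_sq_real,
    real_inner_comm, K.inner_right_of_mem_orthogonal hk hv]
  nlinarith [sq_nonneg ‖k‖]

theorem IsCompactOperator.mul_infDist_eigenspace_le [CompleteSpace E] {T : E →L[ℝ] E}
    (hT : IsCompactOperator T) (hT' : (T : E →ₗ[ℝ] E).IsSymmetric) {ν ρ : ℝ} (hρ : 0 ≤ ρ)
    (hgap : ∀ μ ∈ spectrum ℝ T, μ ≠ ν → ρ ≤ |μ - ν|) (v : E) :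
    ρ * infDist v (eigenspace (T : E →ₗ[ℝ] E) ν) ≤ ‖T v - ν • v‖ := by
  set D := ⨆ μ, eigenspace (T : E →ₗ[ℝ] E) μ
  have hdense : Dense (D : Set E) := by
    rw [Submodule.dense_iff_topologicalClosure_eq_top, ← Submodule.orthogonal_orthogonal_eq_closure,
      ContinuousLinearMap.orthogonalComplement_iSup_eigenspaces_eq_bot hT hT',
      Submodule.bot_orthogonal_eq_top]
  have hclosed : IsClosed {v | ρ * infDist v (eigenspace (T : E →ₗ[ℝ] E) ν) ≤ ‖T v - ν • v‖} :=
    isClosed_le (by fun_prop) (by fun_prop)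
  refine hdense.induction (fun w hw => ?_) hclosed v
  exact hT'.mul_infDist_eigenspace_le_of_mem_iSup hρ
    (fun μ hμ => hgap μ (by rw [ContinuousLinearMap.spectrum_eq]; exact hμ.mem_spectrum)) hw

theorem IsCompactOperator.infDist_spectrum_mul_norm_le [CompleteSpace E] {T : E →L[ℝ] E}
    (hT : IsCompactOperator T) (hT' : (T : E →ₗ[ℝ] E).IsSymmetric) {ν : ℝ} {u : E}
    (hsimple : ∀ x : E, T x = ν • x → ∃ c : ℝ, x = c • u) {v : E} (hv : v ∈ (ℝ ∙ u)ᗮ) :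
    infDist ν (spectrum ℝ T \ {ν}) * ‖v‖ ≤ ‖T v - ν • v‖ := by
  have hgap : ∀ μ ∈ spectrum ℝ T, μ ≠ ν → infDist ν (spectrum ℝ T \ {ν}) ≤ |μ - ν| :=
    fun μ hμ hμν => by
      simpa [Real.dist_eq, abs_sub_comm] using
        infDist_le_dist_of_mem (x := ν) (⟨hμ, hμν⟩ : μ ∈ spectrum ℝ T \ {ν})
  have hE : eigenspace (T : E →ₗ[ℝ] E) ν ≤ ℝ ∙ u := fun x hx => by
    obtain ⟨c, rfl⟩ := hsimple x (mem_eigenspace_iff.mp hx)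
    exact Submodule.smul_mem _ c (Submodule.mem_span_singleton_self u)
  exact (mul_le_mul_of_nonneg_left
    (Submodule.norm_le_infDist_of_mem_orthogonal (Submodule.orthogonal_le hE hv))
    infDist_nonneg).trans (hT.mul_infDist_eigenspace_le hT' infDist_nonneg hgap v)

theorem LinearMap.IsSymmetric.inner_smul_sub_apply_eq {T : E →ₗ[ℝ] E} (hT : T.IsSymmetric)
    {u : E} {ν : ℝ} (hu : T u = ν • u) (ν₀ : ℝ) (x : E) :
    inner ℝ u (ν₀ • x - T x) = (ν₀ - ν) * inner ℝ u x := by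
  rw [inner_sub_right, real_inner_smul_right, ← hT, hu, real_inner_smul_left]
  ring

theorem one_sub_norm_sub_le_inner {u : E} (hu : ‖u‖ = 1) (x : E) :
    1 - ‖x - u‖ ≤ inner ℝ u x := by
  have := real_inner_le_norm u (u - x)
  rw [inner_sub_right, real_inner_self_eq_norm_sq, hu, norm_sub_rev] at this
  linarith

theorem infDist_inv_norm_smul_span_singleton_le (x u : E) (c : ℝ) :
    infDist (‖x‖⁻¹ • x) (ℝ ∙ u) ≤ ‖x‖⁻¹ * ‖x - c • u‖ := by
  calc infDist (‖x‖⁻¹ • x) (ℝ ∙ u) ≤ dist (‖x‖⁻¹ • x) ((‖x‖⁻¹ * c) • u) :=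
        infDist_le_dist_of_mem (Submodule.smul_mem _ _ (Submodule.mem_span_singleton_self u))
    _ = ‖x‖⁻¹ * ‖x - c • u‖ := by
        rw [dist_eq_norm, mul_smul, ← smul_sub, norm_smul, norm_inv, norm_norm]

end

theorem LinearMap.sub_abs_mul_norm_le_norm_smul_sub_apply {F : Type*} [NormedAddCommGroup F]
    [NormedSpace ℝ F] (T : F →ₗ[ℝ] F) {ν ρ : ℝ} {v : F} (hv : ρ * ‖v‖ ≤ ‖T v - ν • v‖)
    (ν₀ : ℝ) : (ρ - |ν₀ - ν|) * ‖v‖ ≤ ‖ν₀ • v - T v‖ := by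
  have hsplit : T v - ν • v = (ν₀ - ν) • v - (ν₀ • v - T v) := by module
  have := norm_sub_le ((ν₀ - ν) • v) (ν₀ • v - T v)
  rw [← hsplit, norm_smul, Real.norm_eq_abs] at this
  linarith

theorem shifted_inverse_iteration_estimate_general
    {H : Type*} [NormedAddCommGroup H] [InnerProductSpace ℝ H] [CompleteSpace H]
    (T : H →L[ℝ] H)
    (hT_sa : ∀ x y : H, (inner ℝ (T x) y : ℝ) = inner ℝ x (T y))
    (hT_compact : IsCompactOperator T)
    (ν : ℝ) (u : H) (hu_norm : ‖u‖ = 1) (heig : T u = ν • u)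
    (h_simple : ∀ x : H, T x = ν • x → ∃ c : ℝ, x = c • u)
    (ρ : ℝ) (hρ_pos : 0 < ρ)
    (hρ : ρ = Metric.infDist ν (spectrum ℝ T \ {ν}))
    (ν₀ : ℝ)
    (hshift : |ν₀ - ν| ≤ ρ / 4)
    (u₀ : H) (hu₀_close : ‖u₀ - u‖ ≤ 1 / 2)
    (us : H) (hus : ν₀ • us - T us = u₀) :
    Metric.infDist (‖us‖⁻¹ • us) (Submodule.span ℝ {u} : Submodule ℝ H) ≤
      4 / ρ * |ν₀ - ν| * ‖u₀ - (inner ℝ u u₀ : ℝ) • u‖ := by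
  have hT : (T : H →ₗ[ℝ] H).IsSymmetric := hT_sa
  set α := inner ℝ u u₀
  set β := inner ℝ u us
  set v := us - β • u
  have hαβ : (ν₀ - ν) * β = α := by
    rw [← hT.inner_smul_sub_apply_eq heig]
    exact congrArg (inner ℝ u) hus
  have hv : v ∈ (ℝ ∙ u)ᗮ := by
    rw [Submodule.mem_orthogonal_singleton_iff_inner_right, inner_sub_right,
      real_inner_smul_right, real_inner_self_eq_norm_sq, hu_norm]
    ring
  have hTv : ν₀ • v - T v = u₀ - α • u := by
    rw [map_sub, map_smul, heig, ← hαβ, ← hus]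
    module
  have hresidual : 3 * ρ / 4 * ‖v‖ ≤ ‖u₀ - α • u‖ := by
    have := (T : H →ₗ[ℝ] H).sub_abs_mul_norm_le_norm_smul_sub_apply
      (hρ ▸ hT_compact.infDist_spectrum_mul_norm_le hT h_simple hv) ν₀
    rw [ContinuousLinearMap.coe_coe, hTv] at this
    nlinarith [norm_nonneg v]
  have hinv : ‖us‖⁻¹ ≤ 2 * |ν₀ - ν| := by
    have hβ := abs_real_inner_le_norm u us
    rw [hu_norm, one_mul] at hβ
    have hα : |α| = |ν₀ - ν| * |β| := by rw [← hαβ, abs_mul]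
    have hlarge : 1 ≤ 2 * |ν₀ - ν| * ‖us‖ := by
      nlinarith [abs_nonneg (ν₀ - ν), le_abs_self α, one_sub_norm_sub_le_inner hu_norm u₀]
    exact (inv_le_iff_one_le_mul₀ (by nlinarith [abs_nonneg (ν₀ - ν)])).mpr (by linarith)
  calc infDist (‖us‖⁻¹ • us) (ℝ ∙ u) ≤ ‖us‖⁻¹ * ‖v‖ :=
        infDist_inv_norm_smul_span_singleton_le us u β
    _ ≤ 2 * |ν₀ - ν| * ‖v‖ := by gcongr
    _ ≤ 4 / ρ * |ν₀ - ν| * ‖u₀ - α • u‖ := by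
        rw [div_mul_eq_mul_div, div_mul_eq_mul_div, le_div_iff₀ hρ_pos]
        nlinarith [mul_le_mul_of_nonneg_left hresidual (abs_nonneg (ν₀ - ν)),
          abs_nonneg (ν₀ - ν), norm_nonneg (u₀ - α • u)]

/-- Shifted inverse iteration estimate (Lemma 3.4, simple eigenvalue case):
if `T u = ν u` with `ν` a simple eigenvalue, `ρ = dist(ν, σ(T)∖{ν}) > 0`, `ν₀` is not
an eigenvalue of `T` with `|ν₀ − ν| ≤ ρ/4`, `u₀` is a unit vector with `‖u₀ − u‖ ≤ 1/2`,
and `(ν₀ − T)uˢ = u₀`, `u' = uˢ/‖uˢ‖`, then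
`dist(u', span{u}) ≤ (4/ρ)|ν₀ − ν|·‖u₀ − proj_{span u} u₀‖`. -/
theorem shifted_inverse_iteration_estimate
    {H : Type*} [NormedAddCommGroup H] [InnerProductSpace ℝ H] [CompleteSpace H]
    (T : H →L[ℝ] H)
    (hT_sa : ∀ x y : H, (inner ℝ (T x) y : ℝ) = inner ℝ x (T y))
    (hT_compact : IsCompactOperator T)
    (ν : ℝ) (u : H) (hu_norm : ‖u‖ = 1) (heig : T u = ν • u)
    (h_simple : ∀ x : H, T x = ν • x → ∃ c : ℝ, x = c • u)
    (ρ : ℝ) (hρ_pos : 0 < ρ)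
    (hρ : ρ = Metric.infDist ν (spectrum ℝ T \ {ν}))
    (ν₀ : ℝ) (hν₀_not_eig : ∀ x : H, x ≠ 0 → T x ≠ ν₀ • x)
    (hshift : |ν₀ - ν| ≤ ρ / 4)
    (u₀ : H) (hu₀_norm : ‖u₀‖ = 1) (hu₀_close : ‖u₀ - u‖ ≤ 1 / 2)
    (us : H) (hus : ν₀ • us - T us = u₀) :
    Metric.infDist (‖us‖⁻¹ • us) (Submodule.span ℝ {u} : Submodule ℝ H) ≤
      4 / ρ * |ν₀ - ν| * ‖u₀ - (inner ℝ u u₀ : ℝ) • u‖ :=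
  shifted_inverse_iteration_estimate_general T hT_sa hT_compact ν u hu_norm heig h_simple ρ hρ_pos
    hρ ν₀ hshift u₀ hu₀_close us hus
end

section
/- Under the setting of the previous lemma, if additionally v satisfies ‖v‖_A = 1 and ‖v−u‖_A ≤ √c/(4√(λ+c)), then the Rayleigh quotient R(v) = a(v,v)/m(v,v) satisfies |R(v) − λ| ≤ 4(λ+c)(1 + λ/c)·‖v − u‖_A². -/
/-!
Write `v = u + e`. Since `u` lies in the left kernel of the symmetric form `a - λ m`, the
numerator `a(v,v) - λ m(v,v)` equals `a(e,e) - λ m(e,e)`, which is `O(‖e‖_A²)` because both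
`a` and `c m` are dominated by the energy inner product. The denominator stays away from zero:
`(λ + c) m(u,·) = ⟪u,·⟫_A`, so `(λ + c) m(v,v) ≥ 1 - 2‖e‖_A ≥ 1/2` once `‖e‖_A ≤ 1/4`.
-/

namespace LinearMap.BilinForm

variable {R M : Type*} [CommRing R] [AddCommGroup M] [Module R M]

theorem IsSymm.apply_add_add_of_forall_left_eq_zero {B : LinearMap.BilinForm R M}
    (hB : B.IsSymm) {u : M} (hu : ∀ w, B u w = 0) (e : M) : B (u + e) (u + e) = B e e := by
  simp [hu, hB.eq e u]

end LinearMap.BilinForm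

section EnergyInner

variable {H : Type*} [NormedAddCommGroup H] [InnerProductSpace ℝ H]
  {a m : LinearMap.BilinForm ℝ H} {c lam : ℝ}

theorem inner_eq_mul_apply_of_eigen (hA : ∀ w z : H, (inner ℝ w z : ℝ) = a w z + c * m w z)
    {u : H} (heig : ∀ w, a u w = lam * m u w) (w : H) :
    (inner ℝ u w : ℝ) = (lam + c) * m u w := by
  rw [hA, heig]; ring

theorem abs_apply_sub_mul_apply_le (hA : ∀ w z : H, (inner ℝ w z : ℝ) = a w z + c * m w z)
    (ha : a.IsNonneg) (hm : m.IsNonneg) (hc : 0 < c) (hlam : 0 ≤ lam) (w : H) :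
    |a w w - lam * m w w| ≤ (1 + lam / c) * ‖w‖ ^ 2 := by
  have hw : a w w + c * m w w = ‖w‖ ^ 2 := by rw [← hA, real_inner_self_eq_norm_sq]
  have ha_le : a w w ≤ ‖w‖ ^ 2 := by nlinarith [hm.nonneg w]
  have hm_le : lam * m w w ≤ lam / c * ‖w‖ ^ 2 := by
    rw [div_mul_eq_mul_div, le_div_iff₀ hc, mul_assoc, mul_comm (m w w)]
    exact mul_le_mul_of_nonneg_left (by linarith [ha.nonneg w]) hlam
  have hlam_c : 0 ≤ lam / c * ‖w‖ ^ 2 := by positivity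
  rw [abs_le]
  constructor <;> nlinarith [ha.nonneg w, mul_nonneg hlam (hm.nonneg w)]

theorem one_sub_two_mul_norm_sub_le_mul_apply
    (hA : ∀ w z : H, (inner ℝ w z : ℝ) = a w z + c * m w z)
    (hm_symm : m.IsSymm) (hm : m.IsNonneg) {u : H} (heig : ∀ w, a u w = lam * m u w)
    (hu : ‖u‖ = 1) (v : H) :
    1 - 2 * ‖v - u‖ ≤ (lam + c) * m v v := by
  set e := v - u
  have hv : v = u + e := (add_sub_cancel u v).symm
  have huu : (lam + c) * m u u = 1 := by
    rw [← inner_eq_mul_apply_of_eigen hA heig, real_inner_self_eq_norm_sq, hu, one_pow]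
  have hue : -‖e‖ ≤ (lam + c) * m u e := by
    rw [← inner_eq_mul_apply_of_eigen hA heig]
    simpa [hu] using neg_le_of_abs_le (abs_real_inner_le_norm u e)
  have hlam_c : 0 ≤ lam + c := by nlinarith [hm.nonneg u]
  have hmvv : m v v = m u u + 2 * m u e + m e e := by
    simp only [hv, map_add, LinearMap.add_apply, hm_symm.eq e u]; ring
  rw [hmvv]
  nlinarith [mul_nonneg hlam_c (hm.nonneg e)]

end EnergyInner

theorem rayleigh_quotient_error_bound_general
    {H : Type*} [NormedAddCommGroup H] [InnerProductSpace ℝ H]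
    (a m : LinearMap.BilinForm ℝ H)
    (ha_symm : a.IsSymm) (ha_pos : ∀ w, 0 ≤ a w w)
    (hm_symm : m.IsSymm) (hm_posdef : ∀ w, w ≠ 0 → 0 < m w w)
    (c : ℝ) (hc : 0 < c)
    (hA : ∀ w z : H, (inner ℝ w z : ℝ) = a w z + c * m w z)
    (lam : ℝ) (hlam : 0 ≤ lam) (u : H)
    (heig : ∀ w, a u w = lam * m u w) (hu_norm : ‖u‖ = 1)
    (v : H)
    (hclose : ‖v - u‖ ≤ Real.sqrt c / (4 * Real.sqrt (lam + c))) :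
    |a v v / m v v - lam| ≤ 4 * (lam + c) * (1 + lam / c) * ‖v - u‖ ^ 2 := by
  have hm : m.IsNonneg :=
    ⟨fun w => (eq_or_ne w 0).elim (fun hw => by simp [hw]) fun hw => (hm_posdef w hw).le⟩
  have hsmall : ‖v - u‖ ≤ 1 / 4 :=
    calc ‖v - u‖ ≤ Real.sqrt c / (4 * Real.sqrt (lam + c)) := hclose
      _ ≤ Real.sqrt (lam + c) / (4 * Real.sqrt (lam + c)) := by gcongr; linarith
      _ = 1 / 4 := by field_simp [(Real.sqrt_pos.mpr (by linarith : 0 < lam + c)).ne']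
  have hden : 1 / 2 ≤ (lam + c) * m v v := by
    linarith [one_sub_two_mul_norm_sub_le_mul_apply hA hm_symm hm heig hu_norm v]
  have hmvv : 0 < m v v := pos_of_mul_pos_right (a := lam + c) (by linarith) (by linarith)
  have hnum : a v v - lam * m v v = a (v - u) (v - u) - lam * m (v - u) (v - u) := by
    simpa using (ha_symm.sub (hm_symm.smul lam)).apply_add_add_of_forall_left_eq_zero
      (u := u) (by simp [heig]) (v - u)
  have hK : 0 ≤ (1 + lam / c) * ‖v - u‖ ^ 2 := by positivity
  rw [div_sub' hmvv.ne', abs_div, abs_of_pos hmvv, div_le_iff₀ hmvv, mul_comm (m v v), hnum]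
  calc _ ≤ (1 + lam / c) * ‖v - u‖ ^ 2 := abs_apply_sub_mul_apply_le hA ⟨ha_pos⟩ hm hc hlam _
    _ ≤ _ := by nlinarith [mul_le_mul_of_nonneg_right hden hK]

/-- Rayleigh quotient error bound (estimate (3.6)): under the same setting,
if `‖v‖_A = 1` and `‖v − u‖_A ≤ √c/(4√(λ+c))`, then
`|a(v,v)/m(v,v) − λ| ≤ 4(λ+c)(1+λ/c)·‖v−u‖_A²`. -/
theorem rayleigh_quotient_error_bound
    {H : Type*} [NormedAddCommGroup H] [InnerProductSpace ℝ H] [CompleteSpace H]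
    (a m : LinearMap.BilinForm ℝ H)
    (ha_symm : a.IsSymm) (ha_pos : ∀ w, 0 ≤ a w w)
    (hm_symm : m.IsSymm) (hm_posdef : ∀ w, w ≠ 0 → 0 < m w w)
    (c : ℝ) (hc : 0 < c)
    (hA : ∀ w z : H, (inner ℝ w z : ℝ) = a w z + c * m w z)
    (lam : ℝ) (hlam : 0 ≤ lam) (u : H)
    (heig : ∀ w, a u w = lam * m u w) (hu_norm : ‖u‖ = 1)
    (v : H) (hv_norm : ‖v‖ = 1)
    (hclose : ‖v - u‖ ≤ Real.sqrt c / (4 * Real.sqrt (lam + c))) :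
    |a v v / m v v - lam| ≤ 4 * (lam + c) * (1 + lam / c) * ‖v - u‖ ^ 2 :=
  rayleigh_quotient_error_bound_general a m ha_symm ha_pos hm_symm hm_posdef c hc hA lam hlam u heig
    hu_norm v hclose
end
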